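/- A nonempty subset I of a generalized Łukasiewicz semi-ring S is an ideal (closed under + and under multiplication by arbitrary elements of S on both sides) if and only if I is closed under + and downward closed (y ≤ x and x ∈ I imply y ∈ I). -/
import Mathlib


/-- A generalized Łukasiewicz semi-ring: an additively idempotent semi-ring with
maps `⁻` (`nm`) and `∼` (`nt`) satisfying (i), (ii), (iii), where `x ≤ y ↔ x + y = y`. -/
class GLSemiring (S : Type*) extends Semiring S where
  add_idem : ∀ x : S, x + x = x
  nm : S → S   -- `x⁻`
  nt : S → S   -- `x∼`
  ax_i : ∀ x y : S, (x * y = 0 ↔ y + nm x = nm x) ∧ (x * y = 0 ↔ x + nt y = nt y)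
  ax_ii : ∀ x y : S, x + y = nm (nt (nt x * y) * nt x) ∧
    x + y = nm (nt x * nt (y * nm x))
  ax_iii : ∀ x y : S, nm (nt y * nt x) = nt (nm y * nm x)

namespace GLSemiring

variable {S : Type*} [GLSemiring S]

lemma h1 (x : S) : x = nm (nt 0 * nt x) := by
  have := (ax_ii x 0).1
  rwa [add_zero, mul_zero] at this

lemma h2 (x : S) : x = nm (nt x * nt 0) := by
  have := (ax_ii x 0).2
  rwa [add_zero, zero_mul] at this

lemma top1 (x : S) : x + nt 0 = nt 0 := (ax_i x 0).2.mp (mul_zero x)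

lemma top2 (y : S) : y + nm 0 = nm 0 := (ax_i 0 y).1.mp (zero_mul y)

lemma nt_one : (nt 1 : S) = 0 := by
  have h := (ax_i (nt 1 : S) 1).2.mpr (add_idem _)
  rwa [mul_one] at h

lemma nm_zero : (nm 0 : S) = 1 := by
  have := h2 (1 : S)
  rw [nt_one, zero_mul] at this
  exact this.symm

lemma nt_zero : (nt 0 : S) = 1 := by
  have e1 := top1 (nm 0 : S)
  have e2 := top2 (nt 0 : S)
  rw [add_comm] at e2
  rw [← e1, e2, nm_zero]

lemma nm_nt (x : S) : nm (nt x) = x := by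
  have := h2 x
  rw [nt_zero, mul_one] at this
  exact this.symm

lemma nt_nm (x : S) : nt (nm x) = x := by
  have := ax_iii x (0 : S)
  rw [← h1, nm_zero, one_mul] at this
  exact this.symm

lemma mul_nm (x : S) : x * nm x = 0 := (ax_i x (nm x)).1.mpr (add_idem _)

lemma nt_mul (x : S) : nt x * x = 0 := (ax_i (nt x) x).2.mpr (add_idem _)

lemma nm_antitone {x y : S} (h : y + x = x) : nm x + nm y = nm y := by
  have h0 : y * nm x + x * nm x = x * nm x := by rw [← add_mul, h]
  rw [mul_nm, add_zero] at h0
  exact (ax_i y (nm x)).1.mp h0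

/-- If `y ≤ x` then `y` is a right multiple of `x`. -/
lemma le_eq_mul {x y : S} (h : y + x = x) :
    y = x * nt (nm y * nm (nm x)) := by
  have e := (ax_ii (nm x) (nm y)).2
  rw [nt_nm, nm_antitone h] at e
  calc y = nt (nm y) := (nt_nm y).symm
    _ = nt (nm (x * nt (nm y * nm (nm x)))) := by rw [← e]
    _ = x * nt (nm y * nm (nm x)) := nt_nm _

lemma mul_le_left (x y : S) : x * y + x = x := by
  have h0 : nt x * (x * y) = 0 := by rw [← mul_assoc, nt_mul, zero_mul]
  have := (ax_i (nt x) (x * y)).1.mp h0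
  rwa [nm_nt] at this

lemma mul_le_right (x y : S) : y * x + x = x := by
  have h0 : (y * x) * nm x = 0 := by rw [mul_assoc, mul_nm, mul_zero]
  have := (ax_i (y * x) (nm x)).2.mp h0
  rwa [nt_nm] at this

end GLSemiring

open GLSemiring in
/-- A nonempty subset `I` of a generalized Łukasiewicz semi-ring is an ideal
(closed under `+` and under two-sided multiplication by arbitrary elements) iff it is
closed under `+` and downward closed for the order `y ≤ x ↔ y + x = x`. -/
theorem GLSemiring.ideal_iff_downward_closed {S : Type*} [GLSemiring S]
    (I : Set S) (hne : I.Nonempty) :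
    ((∀ x ∈ I, ∀ y ∈ I, x + y ∈ I) ∧ (∀ x ∈ I, ∀ y : S, x * y ∈ I ∧ y * x ∈ I)) ↔
    ((∀ x ∈ I, ∀ y ∈ I, x + y ∈ I) ∧ (∀ x ∈ I, ∀ y : S, y + x = x → y ∈ I)) := by
  constructor
  · rintro ⟨hadd, hmul⟩
    refine ⟨hadd, fun x hx y hle => ?_⟩
    rw [le_eq_mul hle]
    exact (hmul x hx _).1
  · rintro ⟨hadd, hdown⟩
    refine ⟨hadd, fun x hx y => ?_⟩
    exact ⟨hdown x hx _ (mul_le_left x y), hdown x hx _ (mul_le_right x y)⟩
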